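/- arXiv:math/0604208 — 3 statements merged into one kernel-verified Lean document; each statement's English description precedes it below -/
import Mathlib

section
/- An n × n matrix A over T with all entries ⪯ 0^ν, each of whose columns contains at least one entry equal to 0^ν, is tropically singular (i.e., |A| ∈ U ∪ {-∞}). -/
/-- The extended tropical semiring `T = ℝ ∪ ℝ^ν ∪ {-∞}`:
`bot` is `-∞`, `real a` is the real element `a`, `ghost a` is `a^ν`. -/
inductive T : Type where
  | bot : T
  | real : ℝ → T
  | ghost : ℝ → T

namespace T

noncomputable section

/-- Tropical addition `⊕` (max with respect to `-∞ ≺ a ≺ a^ν`, ties become ghosts). -/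
def add : T → T → T
  | bot, y => y
  | real a, bot => real a
  | ghost a, bot => ghost a
  | real a, real b => if a < b then real b else if b < a then real a else ghost a
  | real a, ghost b => if b < a then real a else ghost b
  | ghost a, real b => if a < b then real b else ghost a
  | ghost a, ghost b => ghost (max a b)

/-- Tropical multiplication `⊙` (addition of underlying reals, ghosts absorb). -/
def mul : T → T → T
  | bot, _ => bot
  | real _, bot => bot
  | ghost _, bot => bot
  | real a, real b => real (a + b)
  | real a, ghost b => ghost (a + b)
  | ghost a, real b => ghost (a + b)
  | ghost a, ghost b => ghost (a + b)

/-- The total order `⪯` on `T`: `-∞` least, order of reals, `a ≺ a^ν`. -/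
def le : T → T → Prop
  | bot, _ => True
  | real _, bot => False
  | real a, real b => a ≤ b
  | real a, ghost b => a ≤ b
  | ghost _, bot => False
  | ghost a, real b => a < b
  | ghost a, ghost b => a ≤ b

/-- Membership in the ghost ideal `U̅ = U ∪ {-∞}`. -/
def IsGhost : T → Prop
  | bot => True
  | real _ => False
  | ghost _ => True

/-- Membership in `ℝ ∪ {-∞}` (non-ghost elements). -/
def RealOrBot : T → Prop
  | bot => True
  | real _ => True
  | ghost _ => False

/-- The ghost map `ν`. -/
def nu : T → T
  | bot => bot
  | real a => ghost a
  | ghost a => ghost a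

/-- Tropical sum of a list. -/
def sumList : List T → T := fun l => l.foldr add bot

/-- Tropical sum over a finite index set. -/
def sum {α : Type*} (s : Finset α) (f : α → T) : T := sumList (s.toList.map f)

/-- Tropical product of a list. -/
def prodList : List T → T := fun l => l.foldr mul (real 0)

/-- The weight of a permutation `σ` in a matrix: `a_{1,σ(1)} ⊙ ⋯ ⊙ a_{n,σ(n)}`. -/
def permProd {n : ℕ} (A : Matrix (Fin n) (Fin n) T) (σ : Equiv.Perm (Fin n)) : T :=
  prodList ((List.finRange n).map fun i => A i (σ i))

/-- The tropical determinant (permanent) `|A| = ⨁_σ a_{1,σ(1)} ⊙ ⋯ ⊙ a_{n,σ(n)}`. -/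
def det {n : ℕ} (A : Matrix (Fin n) (Fin n) T) : T :=
  sum (Finset.univ : Finset (Equiv.Perm (Fin n))) (fun σ => permProd A σ)

/-- Tropical dependence of a family of `m` vectors in `T^(n)`:
some tropical linear combination with coefficients in `ℝ ∪ {-∞}`, not all `-∞`,
lands in the ghost part `U̅^(n)`. -/
def Dependent {m n : ℕ} (v : Fin m → Fin n → T) : Prop :=
  ∃ α : Fin m → T, (∀ i, RealOrBot (α i)) ∧ (∃ i, α i ≠ bot) ∧
    ∀ j, IsGhost (sum Finset.univ fun i => mul (α i) (v i j))

/-- The tropical rank: maximal number of tropically independent rows. -/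
def rk {m n : ℕ} (A : Matrix (Fin m) (Fin n) T) : ℕ :=
  sSup {k | ∃ f : Fin k → Fin m, Function.Injective f ∧ ¬ Dependent (fun i => A (f i))}

end

end T

/-!
Fix a permutation `σ₀` of maximal weight and, for every column `j`, a row `r j` with
`a_{r j, j} = 0^ν`. The map `i ↦ r (σ₀ i)` on rows has a cycle; rerouting `σ₀` along it (row
`r (σ₀ i)` now takes column `σ₀ i`) replaces entries `⪯ 0^ν` by `0^ν`, so the new permutation
still has maximal weight, and that weight is ghost. A tropical sum whose maximal summand is
ghost is ghost.
-/

namespace Function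

theorem periodicPts_nonempty {α : Type*} [Finite α] [Nonempty α] (f : α → α) :
    (periodicPts f).Nonempty := by
  obtain ⟨x⟩ := ‹Nonempty α›
  obtain ⟨m, n, heq, hne⟩ : ∃ m n, f^[m] x = f^[n] x ∧ m ≠ n := by
    simpa [Injective] using not_injective_infinite_finite (f^[·] x)
  wlog hlt : m < n generalizing m n
  · exact this n m heq.symm hne.symm (by omega)
  refine ⟨f^[m] x, mk_mem_periodicPts (Nat.sub_pos_of_lt hlt) ?_⟩
  rw [IsPeriodicPt, IsFixedPt, ← iterate_add_apply, Nat.sub_add_cancel hlt.le, heq]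

end Function

open Function in
theorem Equiv.Perm.exists_forall_eq_or_eq_self {α : Type*} [Finite α] [Nonempty α] (f : α → α) :
    ∃ τ : Equiv.Perm α, (∀ x, τ x = f x ∨ τ x = x) ∧ ∃ y, τ y = f y := by
  classical
  let τ := ofSubtype ((bijOn_periodicPts f).equiv f)
  have hτ : ∀ x ∈ periodicPts f, τ x = f x := fun x hx => ofSubtype_apply_of_mem _ hx
  obtain ⟨y, hy⟩ := periodicPts_nonempty f
  refine ⟨τ, fun x => ?_, y, hτ y hy⟩
  by_cases hx : x ∈ periodicPts f
  · exact .inl (hτ x hx)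
  · exact .inr (ofSubtype_apply_of_not_mem _ hx)

namespace T

noncomputable def toVal : T → WithBot ℝ
  | bot => ⊥
  | real a => a
  | ghost a => a

@[simp] lemma toVal_bot : toVal bot = ⊥ := rfl
@[simp] lemma toVal_real (a : ℝ) : toVal (real a) = a := rfl
@[simp] lemma toVal_ghost (a : ℝ) : toVal (ghost a) = a := rfl

lemma add_comm (x y : T) : add x y = add y x := by
  cases x <;> cases y <;> grind [add, max_comm]

lemma toVal_add (x y : T) : toVal (add x y) = max (toVal x) (toVal y) := by
  cases x <;> cases y <;> simp only [add, toVal_bot, toVal_real, toVal_ghost] <;>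
    (try split_ifs) <;> simp <;> grind

lemma toVal_mul (x y : T) : toVal (mul x y) = toVal x + toVal y := by
  cases x <;> cases y <;> simp [mul]

lemma toVal_mono {x y : T} (h : le x y) : toVal x ≤ toVal y := by
  cases x <;> cases y <;> simp_all [le, le_of_lt]

lemma IsGhost.add_of_toVal_le {x y : T} (hx : IsGhost x) (hyx : toVal y ≤ toVal x) :
    IsGhost (add x y) := by
  cases x <;> cases y <;> simp_all [add, IsGhost]
  all_goals grind [IsGhost]

lemma isGhost_mul {x y : T} (h : IsGhost x ∨ IsGhost y) : IsGhost (mul x y) := by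
  cases x <;> cases y <;> simp_all [mul, IsGhost]

lemma toVal_le_toVal_sumList {l : List T} {x : T} (hx : x ∈ l) :
    toVal x ≤ toVal (sumList l) := by
  induction l with
  | nil => simp at hx
  | cons a t ih =>
    rw [sumList, List.foldr_cons, toVal_add]
    rcases List.mem_cons.1 hx with rfl | hx
    · exact le_max_left _ _
    · exact (ih hx).trans (le_max_right _ _)

lemma toVal_sumList_le {l : List T} {v : WithBot ℝ} (h : ∀ x ∈ l, toVal x ≤ v) :
    toVal (sumList l) ≤ v := by
  induction l with
  | nil => simp [sumList]
  | cons a t ih =>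
    rw [sumList, List.foldr_cons, toVal_add, max_le_iff]
    exact ⟨h a List.mem_cons_self, ih fun x hx => h x (List.mem_cons_of_mem a hx)⟩

lemma isGhost_sumList {l : List T} {x : T} (hx : x ∈ l) (hg : IsGhost x)
    (hmax : ∀ y ∈ l, toVal y ≤ toVal x) : IsGhost (sumList l) := by
  induction l with
  | nil => simp at hx
  | cons a t ih =>
    rw [sumList, List.foldr_cons]
    have hmax_t : ∀ y ∈ t, toVal y ≤ toVal x := fun y hy => hmax y (List.mem_cons_of_mem a hy)
    rcases List.mem_cons.1 hx with rfl | hx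
    · exact hg.add_of_toVal_le (toVal_sumList_le hmax_t)
    · rw [add_comm]
      exact (ih hx hmax_t).add_of_toVal_le
        ((hmax a List.mem_cons_self).trans (toVal_le_toVal_sumList hx))

lemma isGhost_sum {α : Type*} {s : Finset α} {f : α → T} {a : α} (ha : a ∈ s)
    (hg : IsGhost (f a)) (hmax : ∀ b ∈ s, toVal (f b) ≤ toVal (f a)) : IsGhost (sum s f) := by
  refine isGhost_sumList (List.mem_map_of_mem (Finset.mem_toList.2 ha)) hg ?_
  simp only [List.mem_map, Finset.mem_toList]
  rintro _ ⟨b, hb, rfl⟩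
  exact hmax b hb

lemma isGhost_prodList {l : List T} {x : T} (hx : x ∈ l) (hg : IsGhost x) :
    IsGhost (prodList l) := by
  induction l with
  | nil => simp at hx
  | cons a t ih =>
    rw [prodList, List.foldr_cons]
    rcases List.mem_cons.1 hx with rfl | hx
    · exact isGhost_mul (.inl hg)
    · exact isGhost_mul (.inr (ih hx))

lemma toVal_prodList (l : List T) : toVal (prodList l) = (l.map toVal).sum := by
  induction l with
  | nil => simp [prodList]
  | cons a t ih =>
    rw [prodList, List.foldr_cons, toVal_mul, ← prodList, ih, List.map_cons, List.sum_cons]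

lemma isGhost_permProd {n : ℕ} {A : Matrix (Fin n) (Fin n) T} {σ : Equiv.Perm (Fin n)}
    (i : Fin n) (hi : IsGhost (A i (σ i))) : IsGhost (permProd A σ) :=
  isGhost_prodList (List.mem_map_of_mem (List.mem_finRange i)) hi

lemma toVal_permProd {n : ℕ} (A : Matrix (Fin n) (Fin n) T) (σ : Equiv.Perm (Fin n)) :
    toVal (permProd A σ) = ∑ i, toVal (A i (σ i)) := by
  rw [permProd, toVal_prodList, List.map_map, Fin.sum_univ_def]
  rfl

section Permutations

variable {n : ℕ} {A : Matrix (Fin n) (Fin n) T}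

lemma exists_perm_ghost_zero_or_eq [NeZero n] {r : Fin n → Fin n}
    (hr : ∀ j, A (r j) j = ghost 0) (σ₀ : Equiv.Perm (Fin n)) :
    ∃ σ : Equiv.Perm (Fin n), (∀ i, A i (σ i) = ghost 0 ∨ σ i = σ₀ i) ∧
      ∃ i, A i (σ i) = ghost 0 := by
  obtain ⟨τ, hτ, y, hy⟩ := Equiv.Perm.exists_forall_eq_or_eq_self (r ∘ σ₀)
  have hcycle : ∀ j, τ j = r (σ₀ j) → A (τ j) (σ₀ j) = ghost 0 := fun j h => h ▸ hr _
  refine ⟨τ.symm.trans σ₀, fun i => ?_, τ y, ?_⟩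
  · obtain ⟨j, rfl⟩ := τ.surjective i
    rcases hτ j with h | h
    · exact .inl (by simpa using hcycle j h)
    · exact .inr (by rw [Equiv.trans_apply, Equiv.symm_apply_apply, h])
  · simpa using hcycle y hy

lemma toVal_permProd_le_of_ghost_zero_or_eq {σ σ₀ : Equiv.Perm (Fin n)}
    (hle : ∀ i j, le (A i j) (ghost 0)) (hσ : ∀ i, A i (σ i) = ghost 0 ∨ σ i = σ₀ i) :
    toVal (permProd A σ₀) ≤ toVal (permProd A σ) := by
  rw [toVal_permProd, toVal_permProd]
  refine Finset.sum_le_sum fun i _ => ?_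
  rcases hσ i with h | h
  · rw [h]
    exact toVal_mono (hle i (σ₀ i))
  · rw [h]

end Permutations

end T

/-- a matrix `⪯ 0^ν` each of whose columns contains a `0^ν` entry
is tropically singular. -/
theorem stmt10 {n : ℕ} (A : Matrix (Fin (n + 1)) (Fin (n + 1)) T)
    (hle : ∀ i j, T.le (A i j) (T.ghost 0))
    (hcol : ∀ j, ∃ i, A i j = T.ghost 0) :
    T.IsGhost (T.det A) := by
  choose r hr using hcol
  obtain ⟨σ₀, -, hσ₀⟩ := Finset.exists_max_image Finset.univ
    (fun σ => T.toVal (T.permProd A σ)) Finset.univ_nonempty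
  obtain ⟨σ, hσ, i, hi⟩ := T.exists_perm_ghost_zero_or_eq hr σ₀
  refine T.isGhost_sum (Finset.mem_univ σ) (T.isGhost_permProd i (hi ▸ trivial)) fun τ _ => ?_
  exact (hσ₀ τ (Finset.mem_univ τ)).trans (T.toVal_permProd_le_of_ghost_zero_or_eq hle hσ)
end

section
/- For an n × n matrix A over T, |A| = -∞ if and only if for some 1 ≤ k ≤ n there exist k rows and n+1-k columns of A such that every entry in the intersection of these rows and columns equals -∞. -/
/-!
Since `⊕` and `⊙` produce `-∞` only from `-∞` summands, resp. from a `-∞` factor, `|A| = -∞`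
exactly when every permutation `σ` picks an entry `a_{i,σ(i)} = -∞`. This is the
Frobenius–König situation: by Hall's theorem applied to the finite entries, no permutation
avoids the `-∞` entries iff some `k` rows have all their finite entries in fewer than `k`
columns, and the remaining `≥ n + 1 - k` columns form with these rows a block of `-∞`.
Conversely, a permutation maps the `k` rows of a `k × (n + 1 - k)` block to `k` distinct
columns, of which at most `k - 1` lie outside the block.
-/

namespace T

lemma add_eq_bot {x y : T} : add x y = bot ↔ x = bot ∧ y = bot := by
  cases x <;> cases y <;> simp [add] <;> split_ifs <;> simp

lemma mul_eq_bot {x y : T} : mul x y = bot ↔ x = bot ∨ y = bot := by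
  cases x <;> cases y <;> simp [mul]

lemma sumList_eq_bot {l : List T} : sumList l = bot ↔ ∀ x ∈ l, x = bot := by
  induction l with
  | nil => simp [sumList]
  | cons a l ih => simpa [sumList, add_eq_bot] using fun _ => ih

lemma prodList_eq_bot {l : List T} : prodList l = bot ↔ ∃ x ∈ l, x = bot := by
  induction l with
  | nil => simp [prodList]
  | cons a l ih =>
    simp only [prodList, List.foldr_cons, mul_eq_bot] at ih ⊢
    simp [ih, eq_comm]

lemma sum_eq_bot {α : Type*} {s : Finset α} {f : α → T} :
    sum s f = bot ↔ ∀ a ∈ s, f a = bot := by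
  simp [sum, sumList_eq_bot]

lemma permProd_eq_bot {n : ℕ} {A : Matrix (Fin n) (Fin n) T} {σ : Equiv.Perm (Fin n)} :
    permProd A σ = bot ↔ ∃ i, A i (σ i) = bot := by
  simp [permProd, prodList_eq_bot]

lemma det_eq_bot_iff {n : ℕ} {A : Matrix (Fin n) (Fin n) T} :
    det A = bot ↔ ∀ σ : Equiv.Perm (Fin n), ∃ i, A i (σ i) = bot := by
  simp [det, sum_eq_bot, permProd_eq_bot]

end T

open Finset

section FrobeniusKonig

variable {α : Type*} [Fintype α] (Z : α → α → Prop)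

theorem exists_rectangle_of_forall_perm (h : ∀ σ : Equiv.Perm α, ∃ i, Z i (σ i)) :
    ∃ R C : Finset α, Fintype.card α < #R + #C ∧ ∀ i ∈ R, ∀ j ∈ C, Z i j := by
  classical
  have no_transversal : ¬ ∃ f : α → α, f.Injective ∧ ∀ i, ¬ Z i (f i) := by
    rintro ⟨f, hf, hfZ⟩
    obtain ⟨i, hi⟩ := h (Equiv.ofBijective f hf.bijective_of_finite)
    exact hfZ i hi
  obtain ⟨R, hR⟩ : ∃ R : Finset α, #({j | ∃ i ∈ R, ¬ Z i j} : Finset α) < #R := by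
    simpa using (Fintype.all_card_le_filter_rel_iff_exists_injective _).not.mpr no_transversal
  refine ⟨R, ({j | ∃ i ∈ R, ¬ Z i j} : Finset α)ᶜ, ?_, fun i hi j hj => ?_⟩
  · have := card_le_univ ({j | ∃ i ∈ R, ¬ Z i j} : Finset α)
    rw [card_compl]
    omega
  · by_contra hZ
    exact (mem_compl.mp hj) (mem_filter.mpr ⟨mem_univ j, i, hi, hZ⟩)

theorem exists_mem_apply_perm_of_rectangle {R C : Finset α}
    (hcard : Fintype.card α < #R + #C) (hRC : ∀ i ∈ R, ∀ j ∈ C, Z i j)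
    (σ : Equiv.Perm α) : ∃ i ∈ R, Z i (σ i) := by
  classical
  by_contra! hσ
  have hdisj : Disjoint (R.map σ.toEmbedding) C := by
    refine disjoint_left.mpr fun j hj hjC => ?_
    obtain ⟨i, hi, rfl⟩ := mem_map.mp hj
    exact hσ i hi (hRC i hi _ hjC)
  have := card_le_univ (R.map σ.toEmbedding ∪ C)
  rw [card_union_of_disjoint hdisj, card_map] at this
  omega

end FrobeniusKonig

/-- `|A| = -∞` iff for some `1 ≤ k ≤ n` there are `k` rows and
`n+1-k` columns all of whose common entries are `-∞`. -/
theorem stmt12 {n : ℕ} (A : Matrix (Fin n) (Fin n) T) :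
    T.det A = T.bot ↔
      ∃ k, 1 ≤ k ∧ k ≤ n ∧
        ∃ (R C : Finset (Fin n)), R.card = k ∧ C.card = n + 1 - k ∧
          ∀ i ∈ R, ∀ j ∈ C, A i j = T.bot := by
  rw [T.det_eq_bot_iff]
  constructor
  · intro h
    obtain ⟨R, C, hcard, hRC⟩ := exists_rectangle_of_forall_perm (fun i j => A i j = T.bot) h
    rw [Fintype.card_fin] at hcard
    have hC : #C ≤ n := by simpa using card_le_univ C
    have hR : #R ≤ n := by simpa using card_le_univ R
    obtain ⟨C', hC'C, hC'⟩ := exists_subset_card_eq (s := C) (n := n + 1 - #R) (by omega)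
    exact ⟨#R, by omega, hR, R, C', rfl, hC', fun i hi j hj => hRC i hi j (hC'C hj)⟩
  · rintro ⟨k, -, hkn, R, C, rfl, hC, hRC⟩ σ
    obtain ⟨i, -, hi⟩ := exists_mem_apply_perm_of_rectangle _ (by rw [Fintype.card_fin]; omega) hRC σ
    exact ⟨i, hi⟩
end

section
/- An n × n matrix over T whose rows are tropically dependent (i.e., whose tropical rank is less than n) is tropically singular. -/
/-!
If `|A|` is not ghost, a single permutation `σ` attains the maximal weight, strictly, and its
entries are real. Take a dependence `α` with support `S`. For `j ∈ S` the column `σ j` of the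
combination is ghost while its `j`-th term `α_j a_{j,σ(j)}` is real, so another row `k = g j ∈ S`
satisfies `α_k a_{k,σ(j)} ⪰ α_j a_{j,σ(j)}`. The fixed-point-free self-map `g` of `S` has a
cycle; rerouting `σ` along it gives `τ ≠ σ`, and summing the inequalities over the cycle the
`α`'s cancel, so `τ` weighs at least as much as `σ`.
-/

open Function Set

theorem Function.exists_iterate_mem_periodicPts {ι : Type*} [Finite ι] (g : ι → ι) (x : ι) :
    ∃ k, g^[k] x ∈ periodicPts g := by
  obtain ⟨m, n, hmn, h⟩ := Finite.exists_ne_map_eq_of_infinite fun k : ℕ => g^[k] x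
  wlog hlt : m < n generalizing m n
  · exact this n m hmn.symm h.symm (by omega)
  refine ⟨m, mk_mem_periodicPts (n := n - m) (by omega) ?_⟩
  rw [IsPeriodicPt, IsFixedPt, ← iterate_add_apply, Nat.sub_add_cancel hlt.le, h]

theorem Set.MapsTo.exists_perm {ι : Type*} [Finite ι] {S : Set ι} {g : ι → ι}
    (hg : MapsTo g S S) (hS : S.Nonempty) :
    ∃ π : Equiv.Perm ι, (∀ x, π x = x ∨ x ∈ S ∧ π x = g x) ∧ ∃ x ∈ S, π x = g x := by
  classical
  set g₁ := S.piecewise g id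
  have hg₁ : MapsTo g₁ S S := fun x hx => by simpa [g₁, hx] using hg hx
  obtain ⟨y, hy⟩ := hS
  obtain ⟨k, hk⟩ := exists_iterate_mem_periodicPts g₁ y
  let π := Equiv.Perm.ofSubtype ((bijOn_periodicPts g₁).equiv g₁)
  have hπ : ∀ x ∈ periodicPts g₁, π x = g₁ x := fun x hx =>
    Equiv.Perm.ofSubtype_apply_of_mem _ hx
  refine ⟨π, fun x => ?_, g₁^[k] y, hg₁.iterate k hy, ?_⟩
  · by_cases hx : x ∈ periodicPts g₁
    · by_cases hxS : x ∈ S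
      · exact Or.inr ⟨hxS, by simp [hπ x hx, g₁, hxS]⟩
      · exact Or.inl (by simp [hπ x hx, g₁, hxS])
    · exact Or.inl (Equiv.Perm.ofSubtype_apply_of_not_mem _ hx)
  · rw [hπ _ hk]; simp [g₁, hg₁.iterate k hy]

namespace T

def val : T → WithBot ℝ
  | bot => ⊥
  | real a => a
  | ghost a => a

/-- The real part, with junk value `0` at `-∞`. -/
def nval : T → ℝ
  | bot => 0
  | real a => a
  | ghost a => a

lemma not_isGhost_iff {x : T} : ¬ IsGhost x ↔ ∃ a, x = real a := by
  cases x <;> simp [IsGhost]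

lemma val_add (x y : T) : val (add x y) = max (val x) (val y) := by
  cases x <;> cases y <;> simp only [add, val] <;> (try split_ifs) <;> simp_all [le_of_lt]

lemma not_isGhost_add {x y : T} (h : ¬ IsGhost (add x y)) :
    (¬ IsGhost x ∧ val y < val x) ∨ (¬ IsGhost y ∧ val x < val y) := by
  cases x <;> cases y <;> simp only [add, val, IsGhost] at h ⊢ <;> (try split_ifs at h) <;> simp_all

lemma real_add_of_val_lt {a : ℝ} {y : T} (h : val y < a) : add (real a) y = real a := by
  cases y <;> simp_all [add, val, not_lt_of_gt]

lemma add_real_of_val_lt {a : ℝ} {x : T} (h : val x < a) : add x (real a) = real a := by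
  cases x <;> simp_all [add, val]

lemma val_mul (x y : T) : val (mul x y) = val x + val y := by
  cases x <;> cases y <;> simp [mul, val, ← WithBot.coe_add]

lemma coe_le_val_mul_iff {r : ℝ} {x y : T} :
    r ≤ val (mul x y) ↔ x ≠ bot ∧ y ≠ bot ∧ r ≤ nval x + nval y := by
  cases x <;> cases y <;> simp [mul, val, nval] <;> norm_cast

lemma val_eq_nval {x : T} (h : x ≠ bot) : val x = nval x := by
  cases x <;> simp_all [val, nval]

lemma isGhost_mul_of_left {x : T} (h : IsGhost x) (y : T) : IsGhost (mul x y) := by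
  cases x <;> cases y <;> simp_all [mul, IsGhost]

lemma isGhost_mul_of_right (x : T) {y : T} (h : IsGhost y) : IsGhost (mul x y) := by
  cases x <;> cases y <;> simp_all [mul, IsGhost]

lemma val_sumList_lt {l : List T} {a : ℝ} (h : ∀ y ∈ l, val y < a) : val (sumList l) < a := by
  induction l with
  | nil => exact WithBot.bot_lt_coe a
  | cons x l ih =>
    simp only [List.forall_mem_cons] at h
    exact (val_add _ _).trans_lt (max_lt h.1 (ih h.2))

lemma val_le_val_sumList {l : List T} {y : T} (hy : y ∈ l) : val y ≤ val (sumList l) := by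
  induction l with
  | nil => simp at hy
  | cons x l ih =>
    rw [sumList, List.foldr_cons, ← sumList, val_add]
    rcases List.mem_cons.1 hy with rfl | hy
    · exact le_max_left _ _
    · exact (ih hy).trans (le_max_right _ _)

section Sum

variable {β : Type*} {f : β → T} {i : β} {a : ℝ}

lemma sumList_map_eq_real {l : List β} (hl : l.Nodup) (hi : i ∈ l) (hfi : f i = real a)
    (hlt : ∀ k ∈ l, k ≠ i → val (f k) < a) : sumList (l.map f) = real a := by
  induction l with
  | nil => simp at hi
  | cons x l ih =>
    rw [List.nodup_cons] at hl
    rw [List.map_cons, sumList, List.foldr_cons, ← sumList]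
    by_cases hxi : x = i
    · subst hxi
      rw [hfi]
      refine real_add_of_val_lt (val_sumList_lt ?_)
      simp only [List.mem_map, forall_exists_index, and_imp]
      rintro _ k hk rfl
      exact hlt k (List.mem_cons_of_mem _ hk) (ne_of_mem_of_not_mem hk hl.1)
    · rw [ih hl.2 ((List.mem_cons.1 hi).resolve_left (Ne.symm hxi))
        (fun k hk => hlt k (List.mem_cons_of_mem _ hk))]
      exact add_real_of_val_lt (hlt x List.mem_cons_self hxi)

lemma exists_strict_max_of_not_isGhost_sumList_map {l : List β} (hl : l.Nodup)
    (h : ¬ IsGhost (sumList (l.map f))) :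
    ∃ i ∈ l, ∃ a : ℝ, f i = real a ∧ ∀ k ∈ l, k ≠ i → val (f k) < a := by
  induction l with
  | nil => exact absurd trivial h
  | cons x l ih =>
    rw [List.nodup_cons] at hl
    rw [List.map_cons, sumList, List.foldr_cons, ← sumList] at h
    rcases not_isGhost_add h with ⟨hx, hlt⟩ | ⟨hrest, hlt⟩
    · obtain ⟨a, hfx⟩ := not_isGhost_iff.1 hx
      refine ⟨x, List.mem_cons_self, a, hfx, fun k hk hkx => ?_⟩
      rw [hfx] at hlt
      have hk : f k ∈ l.map f := List.mem_map_of_mem ((List.mem_cons.1 hk).resolve_left hkx)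
      exact (val_le_val_sumList hk).trans_lt hlt
    · obtain ⟨i, hi, a, hfi, hmax⟩ := ih hl.2 hrest
      rw [sumList_map_eq_real hl.2 hi hfi hmax] at hlt
      refine ⟨i, List.mem_cons_of_mem _ hi, a, hfi, fun k hk hki => ?_⟩
      rcases List.mem_cons.1 hk with rfl | hk
      · exact hlt
      · exact hmax k hk hki

lemma sum_eq_real {s : Finset β} (hi : i ∈ s) (hfi : f i = real a)
    (hlt : ∀ k ∈ s, k ≠ i → val (f k) < a) : T.sum s f = real a :=
  sumList_map_eq_real s.nodup_toList (Finset.mem_toList.2 hi) hfi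
    (fun k hk => hlt k (Finset.mem_toList.1 hk))

lemma exists_strict_max_of_not_isGhost_sum {s : Finset β} (h : ¬ IsGhost (T.sum s f)) :
    ∃ i ∈ s, ∃ a : ℝ, f i = real a ∧ ∀ k ∈ s, k ≠ i → val (f k) < a := by
  simpa using exists_strict_max_of_not_isGhost_sumList_map s.nodup_toList h

lemma exists_ne_le_val_of_isGhost_sum {s : Finset β} (hg : IsGhost (T.sum s f)) (hi : i ∈ s)
    (hfi : f i = real a) : ∃ k ∈ s, k ≠ i ∧ a ≤ val (f k) := by
  by_contra! hlt
  rw [sum_eq_real hi hfi hlt] at hg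
  exact hg

lemma exists_ne_add_le_of_isGhost_sum_mul {s : Finset β} {α v : β → T} {b c : ℝ}
    (hg : IsGhost (T.sum s fun k => mul (α k) (v k))) (hi : i ∈ s) (hα : α i = real c)
    (hv : v i = real b) :
    ∃ k ∈ s, k ≠ i ∧ α k ≠ bot ∧ v k ≠ bot ∧ c + b ≤ nval (α k) + nval (v k) := by
  obtain ⟨k, hk, hki, hle⟩ := exists_ne_le_val_of_isGhost_sum hg hi
    (show mul (α i) (v i) = real (c + b) by rw [hα, hv]; rfl)
  exact ⟨k, hk, hki, coe_le_val_mul_iff.1 hle⟩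

end Sum

lemma exists_eq_real_of_realOrBot {x : T} (hx : RealOrBot x) (hne : x ≠ bot) :
    ∃ a, x = real a := by
  cases x <;> simp_all [RealOrBot]

lemma not_isGhost_of_mem_prodList {l : List T} {x : T} (h : ¬ IsGhost (prodList l))
    (hx : x ∈ l) : ¬ IsGhost x := by
  induction l with
  | nil => simp at hx
  | cons y l ih =>
    rw [prodList, List.foldr_cons, ← prodList] at h
    rcases List.mem_cons.1 hx with rfl | hx
    · exact fun hg => h (isGhost_mul_of_left hg _)
    · exact ih (fun hg => h (isGhost_mul_of_right _ hg)) hx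

lemma val_prodList (l : List T) : val (prodList l) = (l.map val).sum := by
  induction l with
  | nil => rfl
  | cons x l ih =>
    rw [prodList, List.foldr_cons, ← prodList, val_mul, ih, List.map_cons, List.sum_cons]

section Matrix

variable {n : ℕ} (A : Matrix (Fin n) (Fin n) T)

lemma val_permProd (σ : Equiv.Perm (Fin n)) :
    val (permProd A σ) = ∑ i, val (A i (σ i)) := by
  rw [permProd, val_prodList, List.map_map, Fin.sum_univ_def]
  rfl

lemma not_isGhost_of_not_isGhost_permProd {σ : Equiv.Perm (Fin n)}
    (h : ¬ IsGhost (permProd A σ)) (i : Fin n) : ¬ IsGhost (A i (σ i)) :=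
  not_isGhost_of_mem_prodList h (List.mem_map_of_mem (List.mem_finRange i))

theorem exists_ne_val_permProd_le_of_dependent (h : Dependent A) {σ : Equiv.Perm (Fin n)}
    (hσ : ¬ IsGhost (permProd A σ)) :
    ∃ τ ≠ σ, val (permProd A σ) ≤ val (permProd A τ) := by
  obtain ⟨α, hα, ⟨i₀, hi₀⟩, hcol⟩ := h
  choose m hm using fun i => not_isGhost_iff.1 (not_isGhost_of_not_isGhost_permProd A hσ i)
  have step : ∀ j, α j ≠ bot → ∃ k, α k ≠ bot ∧ k ≠ j ∧ A k (σ j) ≠ bot ∧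
      nval (α j) + m j ≤ nval (α k) + nval (A k (σ j)) := by
    intro j hj
    obtain ⟨c, hc⟩ := exists_eq_real_of_realOrBot (hα j) hj
    obtain ⟨k, -, hkj, hk, hA, hle⟩ :=
      exists_ne_add_le_of_isGhost_sum_mul (hcol (σ j)) (Finset.mem_univ j) hc (hm j)
    exact ⟨k, hk, hkj, hA, by rwa [hc]⟩
  choose! g hgS hgne hgA hgle using step
  obtain ⟨π, hπ, x, hxS, hx⟩ := Set.MapsTo.exists_perm (S := {j | α j ≠ bot}) hgS ⟨i₀, hi₀⟩
  have key : ∀ j, A (π j) (σ j) ≠ bot ∧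
      nval (α j) + m j ≤ nval (α (π j)) + nval (A (π j) (σ j)) := by
    intro j
    rcases hπ j with h | ⟨hj, h⟩
    · rw [h, hm]
      exact ⟨T.noConfusion, le_rfl⟩
    · rw [h]
      exact ⟨hgA j hj, hgle j hj⟩
  have hsum : ∑ j, m j ≤ ∑ j, nval (A (π j) (σ j)) := by
    have := Finset.sum_le_sum fun j (_ : j ∈ Finset.univ) => (key j).2
    rwa [Finset.sum_add_distrib, Finset.sum_add_distrib,
      Equiv.sum_comp π fun i => nval (α i), add_le_add_iff_left] at this
  refine ⟨σ * π⁻¹, fun he => hgne x hxS ?_, ?_⟩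
  · rw [← hx, inv_eq_one.1 (mul_eq_left.1 he), Equiv.Perm.one_apply]
  · calc val (permProd A σ) = ∑ j, val (A j (σ j)) := val_permProd A σ
      _ = ↑(∑ j, m j) := by simp [hm, val]
      _ ≤ ↑(∑ j, nval (A (π j) (σ j))) := WithBot.coe_le_coe.2 hsum
      _ = ∑ j, val (A (π j) ((σ * π⁻¹) (π j))) := by simp [val_eq_nval (key _).1]
      _ = val (permProd A (σ * π⁻¹)) := by
        rw [Equiv.sum_comp π fun i => val (A i ((σ * π⁻¹) i)), val_permProd]

end Matrix

end T

/-- a square matrix whose rows are tropically dependent is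
tropically singular. -/
theorem stmt13 {n : ℕ} (A : Matrix (Fin n) (Fin n) T)
    (h : T.Dependent (fun i j => A i j)) :
    T.IsGhost (T.det A) := by
  by_contra hdet
  obtain ⟨σ, -, M, hσ, hmax⟩ := T.exists_strict_max_of_not_isGhost_sum hdet
  obtain ⟨τ, hτ, hle⟩ :=
    T.exists_ne_val_permProd_le_of_dependent A h (hσ ▸ T.not_isGhost_iff.2 ⟨M, rfl⟩)
  rw [hσ] at hle
  exact (hmax τ (Finset.mem_univ τ) hτ).not_ge hle
end
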